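/- Let q be a self-join-free Boolean conjunctive query. If atom F attacks atom G and G attacks atom H in the attack graph of q, then F attacks H or G attacks F (or both). -/

import Mathlib

/-!
Suppose `F` attacks `G` but `G` does not attack `F`. Then `G` attacks no variable of `F⁺`: the
variables of `F⁺` not attacked by `G` contain `key(F)` (else `G` would attack `F`) and are closed
under the FD of every atom `E ≠ G` of `q \ {F}` (an attack by `G` on a variable of `E` spreads to
`key(E)` unless `key(E) ⊆ G⁺`, and then `vars(E) ⊆ G⁺`). The FD of `G` itself could only be used
if `key(G) ⊆ F⁺`, whence `vars(G) ⊆ F⁺`, which the last step of `F ⇝ G` rules out.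
Hence every step of a witness for `G ⇝ H` also shares a variable outside `F⁺`, and the witnesses
for `F ⇝ G` and `G ⇝ H` concatenate to one for `F ⇝ H`, unless `H = F`.
-/

/-- A fact `R(a₁,…,aₙ)`: relation name, primary-key values, non-key values. -/
structure DBFact where
  rel : ℕ
  key : List ℕ
  rest : List ℕ
deriving DecidableEq

/-- Two facts are key-equal if they have the same relation name and primary-key value. -/
def keyEq (A B : DBFact) : Prop := A.rel = B.rel ∧ A.key = B.key

instance (A B : DBFact) : Decidable (keyEq A B) :=
  inferInstanceAs (Decidable (_ ∧ _))

/-- A set of facts is consistent if it contains no two distinct key-equal facts. -/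
def Consistent (s : Finset DBFact) : Prop := ∀ A ∈ s, ∀ B ∈ s, keyEq A B → A = B

/-- A repair of `db` is a maximal (w.r.t. ⊆) consistent subset of `db`. -/
def Repair (db r : Finset DBFact) : Prop :=
  r ⊆ db ∧ Consistent r ∧ ∀ r', r' ⊆ db → Consistent r' → r ⊆ r' → r = r'

/-- A term is a variable (inl) or a constant (inr). -/
abbrev Term := ℕ ⊕ ℕ

/-- An atom `R(t₁,…,tₙ)` with key positions and non-key positions. -/
structure Atom where
  rel : ℕ
  key : List Term
  rest : List Term
deriving DecidableEq

def termVars (l : List Term) : Finset ℕ := (l.filterMap fun t => t.getLeft?).toFinset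

/-- Variables at primary-key positions of an atom. -/
def keyVars (F : Atom) : Finset ℕ := termVars F.key

/-- All variables of an atom. -/
def atomVars (F : Atom) : Finset ℕ := termVars F.key ∪ termVars F.rest

/-- A query (finite set of atoms) is self-join-free: no relation name occurs twice. -/
def SJF (q : Finset Atom) : Prop := ∀ F ∈ q, ∀ G ∈ q, F.rel = G.rel → F = G

/-- Apply a valuation (total map from variables to constants) to an atom, yielding a fact. -/
def applyVal (θ : ℕ → ℕ) (F : Atom) : DBFact :=
  ⟨F.rel, F.key.map (Sum.elim θ id), F.rest.map (Sum.elim θ id)⟩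

/-- Semantic implication of a functional dependency `X → Y` by a set of FDs
(two-tuple semantics, which is equivalent to the standard one for FDs). -/
def FDImplies (fds : Set (Set ℕ × Set ℕ)) (X Y : Set ℕ) : Prop :=
  ∀ θ μ : ℕ → ℕ,
    (∀ p ∈ fds, (∀ v ∈ p.1, θ v = μ v) → ∀ v ∈ p.2, θ v = μ v) →
    (∀ v ∈ X, θ v = μ v) → ∀ v ∈ Y, θ v = μ v

/-- `FD(q) = { key(F) → vars(F) : F ∈ q }`. -/
def FDs (q : Finset Atom) : Set (Set ℕ × Set ℕ) :=
  {p | ∃ F ∈ q, p = ((keyVars F : Set ℕ), (atomVars F : Set ℕ))}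

/-- `F⁺ = { x : FD(q \ {F}) ⊨ key(F) → x }`. -/
def plus (q : Finset Atom) (F : Atom) : Set ℕ :=
  {x | FDImplies (FDs (q.erase F)) (keyVars F : Set ℕ) {x}}

/-- One step of a witness for an attack by `F`: consecutive atoms share a variable outside `F⁺`. -/
def AttackStep (q : Finset Atom) (F : Atom) (A B : Atom) : Prop :=
  ¬ ((atomVars A ∩ atomVars B : Finset ℕ) : Set ℕ) ⊆ plus q F

/-- `F` attacks `G` in the attack graph of `q`. -/
def Attacks (q : Finset Atom) (F G : Atom) : Prop :=
  F ≠ G ∧ F ∈ q ∧ ∃ L : List Atom, (∀ A ∈ L, A ∈ q) ∧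
    List.Chain (AttackStep q F) F L ∧ (F :: L).getLast (List.cons_ne_nil F L) = G

/-- `F` attacks the variable `z`. -/
def AttacksVar (q : Finset Atom) (F : Atom) (z : ℕ) : Prop :=
  z ∉ plus q F ∧ F ∈ q ∧ ∃ L : List Atom, (∀ A ∈ L, A ∈ q) ∧
    List.Chain (AttackStep q F) F L ∧ z ∈ atomVars ((F :: L).getLast (List.cons_ne_nil F L))

/-- `r ⊨ ζ(q)` for a valuation `ζ` over the variable set `X`. -/
def Sat (r : Finset DBFact) (q : Finset Atom) (X : Finset ℕ) (ζ : ℕ → ℕ) : Prop :=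
  ∃ θ : ℕ → ℕ, (∀ v ∈ X, θ v = ζ v) ∧ ∀ F ∈ q, applyVal θ F ∈ r

/-- `r ⊨ q`. -/
def Sat0 (r : Finset DBFact) (q : Finset Atom) : Prop :=
  ∃ θ : ℕ → ℕ, ∀ F ∈ q, applyVal θ F ∈ r

/-- A fact `A` is relevant for `q` in `r` if `A ∈ θ(q) ⊆ r` for some valuation `θ`. -/
def Relevant (A : DBFact) (q : Finset Atom) (r : Finset DBFact) : Prop :=
  ∃ θ : ℕ → ℕ, (∃ F ∈ q, applyVal θ F = A) ∧ ∀ F ∈ q, applyVal θ F ∈ r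

open Relation

theorem List.isChain_cons_and_iff {α : Type*} {R : α → α → Prop} {p : α → Prop} {a : α}
    {l : List α} :
    IsChain (fun x y => p y ∧ R x y) (a :: l) ↔ (∀ x ∈ l, p x) ∧ IsChain R (a :: l) := by
  induction l generalizing a with
  | nil => simp
  | cons b l ih =>
    simp only [isChain_cons_cons, ih, mem_cons, forall_eq_or_imp]
    tauto

theorem List.exists_isChain_cons_iff_reflTransGen {α : Type*} {R : α → α → Prop}
    {p : α → Prop} {a b : α} :
    (∃ l : List α, (∀ x ∈ l, p x) ∧ IsChain R (a :: l) ∧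
        (a :: l).getLast (cons_ne_nil a l) = b) ↔
      ReflTransGen (fun x y => p y ∧ R x y) a b := by
  constructor
  · rintro ⟨l, hp, hl, rfl⟩
    exact relationReflTransGen_of_exists_isChain_cons l (isChain_cons_and_iff.2 ⟨hp, hl⟩) rfl
  · intro h
    obtain ⟨l, hl, hlast⟩ := exists_isChain_cons_of_relationReflTransGen h
    exact ⟨l, (isChain_cons_and_iff.1 hl).1, (isChain_cons_and_iff.1 hl).2, hlast⟩

theorem mem_of_fdImplies {fds : Set (Set ℕ × Set ℕ)} {X C : Set ℕ} {x : ℕ}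
    (h : FDImplies fds X {x}) (hX : X ⊆ C) (hC : ∀ p ∈ fds, p.1 ⊆ C → p.2 ⊆ C) : x ∈ C := by
  classical
  have hagree : ∀ v, (0 = if v ∈ C then 0 else 1) ↔ v ∈ C := by
    intro v
    split_ifs <;> simp_all
  refine (hagree x).1 (h (fun _ => 0) (fun v => if v ∈ C then 0 else 1) ?_ ?_ x rfl)
  · intro p hp hp1 v hv
    exact (hagree v).2 (hC p hp (fun w hw => (hagree w).1 (hp1 w hw)) hv)
  · exact fun v hv => (hagree v).2 (hX hv)

section Plus

variable {q : Finset Atom} {E F : Atom}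

theorem keyVars_subset_atomVars (F : Atom) : keyVars F ⊆ atomVars F :=
  Finset.subset_union_left

theorem plus_subset_of_closed {C : Set ℕ} (hF : (keyVars F : Set ℕ) ⊆ C)
    (hC : ∀ E ∈ q, E ≠ F → (keyVars E : Set ℕ) ⊆ C → (atomVars E : Set ℕ) ⊆ C) :
    plus q F ⊆ C := by
  intro x hx
  refine mem_of_fdImplies hx hF ?_
  rintro _ ⟨E, hE, rfl⟩
  exact hC E (Finset.mem_of_mem_erase hE) (Finset.ne_of_mem_erase hE)

theorem keyVars_subset_plus (q : Finset Atom) (F : Atom) : (keyVars F : Set ℕ) ⊆ plus q F :=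
  fun x hx _ _ _ hkey _ hv => Set.mem_singleton_iff.1 hv ▸ hkey x hx

theorem atomVars_subset_plus (hE : E ∈ q) (hEF : E ≠ F)
    (hkey : (keyVars E : Set ℕ) ⊆ plus q F) : (atomVars E : Set ℕ) ⊆ plus q F := by
  intro x hx θ μ hfd hkeyF v hv
  rw [Set.mem_singleton_iff.1 hv]
  exact hfd _ ⟨E, Finset.mem_erase.2 ⟨hEF, hE⟩, rfl⟩
    (fun w hw => hkey hw θ μ hfd hkeyF w rfl) x hx

end Plus

section AttackGraph

variable {q : Finset Atom} {E F G H : Atom} {x y : ℕ}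

def AttackEdge (q : Finset Atom) (F A B : Atom) : Prop := B ∈ q ∧ AttackStep q F A B

theorem attacks_iff : Attacks q F G ↔ F ≠ G ∧ F ∈ q ∧ ReflTransGen (AttackEdge q F) F G :=
  and_congr_right' (and_congr_right' List.exists_isChain_cons_iff_reflTransGen)

theorem attacksVar_iff : AttacksVar q F x ↔
    x ∉ plus q F ∧ F ∈ q ∧ ∃ A, ReflTransGen (AttackEdge q F) F A ∧ x ∈ atomVars A := by
  refine and_congr_right' (and_congr_right' ⟨?_, ?_⟩)
  · rintro ⟨L, hL, hchain, hxL⟩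
    exact ⟨_, List.exists_isChain_cons_iff_reflTransGen.1 ⟨L, hL, hchain, rfl⟩, hxL⟩
  · rintro ⟨A, hA, hxA⟩
    obtain ⟨L, hL, hchain, rfl⟩ := List.exists_isChain_cons_iff_reflTransGen.2 hA
    exact ⟨L, hL, hchain, hxA⟩

theorem AttacksVar.reflTransGen (h : AttacksVar q G x) (hE : E ∈ q) (hxE : x ∈ atomVars E) :
    ReflTransGen (AttackEdge q G) G E := by
  obtain ⟨hx, -, A, hA, hxA⟩ := attacksVar_iff.1 h
  exact hA.tail ⟨hE, fun hsub => hx (hsub (Finset.mem_inter.2 ⟨hxA, hxE⟩))⟩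

theorem AttacksVar.attacks (h : AttacksVar q G x) (hF : F ∈ q) (hGF : G ≠ F)
    (hxF : x ∈ atomVars F) : Attacks q G F :=
  attacks_iff.2 ⟨hGF, h.2.1, h.reflTransGen hF hxF⟩

theorem AttacksVar.of_mem_atomVars (h : AttacksVar q G x) (hE : E ∈ q) (hxE : x ∈ atomVars E)
    (hyE : y ∈ atomVars E) (hy : y ∉ plus q G) : AttacksVar q G y :=
  attacksVar_iff.2 ⟨hy, h.2.1, E, h.reflTransGen hE hxE, hyE⟩

theorem not_atomVars_subset_plus_of_attacks (h : Attacks q F G) :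
    ¬ (atomVars G : Set ℕ) ⊆ plus q F := by
  obtain ⟨hFG, -, hreach⟩ := attacks_iff.1 h
  rcases hreach.cases_tail with rfl | ⟨A, -, -, hstep⟩
  · exact (hFG rfl).elim
  · exact fun hsub => hstep ((Finset.coe_subset.2 Finset.inter_subset_right).trans hsub)

theorem not_attacksVar_of_mem_plus (hF : F ∈ q) (hGF : G ≠ F) (hnGF : ¬ Attacks q G F)
    (hkey : ¬ (keyVars G : Set ℕ) ⊆ plus q F) (hx : x ∈ plus q F) : ¬ AttacksVar q G x := by
  suffices plus q F ⊆ {v | v ∈ plus q F ∧ ¬ AttacksVar q G v} from (this hx).2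
  refine plus_subset_of_closed (fun v hv => ⟨keyVars_subset_plus q F hv,
    fun hGv => hnGF (hGv.attacks hF hGF (keyVars_subset_atomVars F hv))⟩) ?_
  intro E hE hEF hEC v hv
  have hkeyE : (keyVars E : Set ℕ) ⊆ plus q F := fun y hy => (hEC hy).1
  refine ⟨atomVars_subset_plus hE hEF hkeyE hv, fun hGv => ?_⟩
  have hEG : E ≠ G := by
    rintro rfl
    exact hkey hkeyE
  have hkeyEG : (keyVars E : Set ℕ) ⊆ plus q G := fun y hy => by
    by_contra hyG
    exact (hEC hy).2 (hGv.of_mem_atomVars hE hv (keyVars_subset_atomVars E hy) hyG)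
  exact hGv.1 (atomVars_subset_plus hE hEG hkeyEG hv)

theorem not_attacksVar_of_attacks (h : Attacks q F G) (hnGF : ¬ Attacks q G F)
    (hx : x ∈ plus q F) : ¬ AttacksVar q G x := by
  intro hGx
  obtain ⟨hFG, hF, -⟩ := attacks_iff.1 h
  refine not_attacksVar_of_mem_plus hF hFG.symm hnGF (fun hkey => ?_) hx hGx
  exact not_atomVars_subset_plus_of_attacks h (atomVars_subset_plus hGx.2.1 hFG.symm hkey)

theorem reflTransGen_attackEdge_of_attacksVar_not_mem_plus (hG : G ∈ q)
    (hGF : ∀ x, AttacksVar q G x → x ∉ plus q F) (h : ReflTransGen (AttackEdge q G) G H) :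
    ReflTransGen (AttackEdge q F) G H := by
  induction h with
  | refl => rfl
  | tail hreach hedge ih =>
    obtain ⟨hB, hstep⟩ := hedge
    obtain ⟨x, hxAB, hxG⟩ := Set.not_subset.1 hstep
    have hGx := attacksVar_iff.2 ⟨hxG, hG, _, hreach, (Finset.mem_inter.1 hxAB).1⟩
    exact ih.tail ⟨hB, fun hsub => hGF x hGx (hsub hxAB)⟩

end AttackGraph

theorem attack_quasi_transitive_general (q : Finset Atom) (F G H : Atom)
    (h1 : Attacks q F G) (h2 : Attacks q G H) :
    Attacks q F H ∨ Attacks q G F := by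
  by_cases hGF : Attacks q G F
  · exact Or.inr hGF
  obtain ⟨-, hF, hFG⟩ := attacks_iff.1 h1
  obtain ⟨-, hG, hGH⟩ := attacks_iff.1 h2
  have hFH : F ≠ H := by
    rintro rfl
    exact hGF h2
  have hGH' := reflTransGen_attackEdge_of_attacksVar_not_mem_plus hG
    (fun x hGx hxF => not_attacksVar_of_attacks h1 hGF hxF hGx) hGH
  exact Or.inl (attacks_iff.2 ⟨hFH, hF, hFG.trans hGH'⟩)

/-- If `F` attacks `G` and `G` attacks `H`, then `F` attacks `H` or `G` attacks `F`. -/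
theorem attack_quasi_transitive (q : Finset Atom) (hq : SJF q) (F G H : Atom)
    (h1 : Attacks q F G) (h2 : Attacks q G H) :
    Attacks q F H ∨ Attacks q G F :=
  attack_quasi_transitive_general q F G H h1 h2
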